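/- Let γ̂, λ > 0, T > 0, and let B̃, B̃′ : [0, T] → ℝ be continuous bounded functions with associated nonpositive Riccati solutions F^{B̃} and F^{B̃′}. Then for all 0 ≤ t ≤ s ≤ T, | exp(∫ₜˢ F^{B̃}(r) dr) − exp(∫ₜˢ F^{B̃′}(r) dr) | ≤ (γ̂/λ) ( ‖B̃‖_∞ + ‖B̃′‖_∞ ) ‖B̃ − B̃′‖_∞ (T − t)². -/

import Mathlib

/-!
The difference `G = F - F'` solves the linear backward equation `G' = a - (F + F') G`,
`G T = 0`, with `a = (γ̂/λ)(B̃² - B̃'²)`. Since `F + F' ≤ 0`, the integrating factor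
`exp (∫_T^t (F + F'))` is nonincreasing in `t`, so variation of constants gives
`|G t| ≤ ‖a‖_∞ (T - t)`, and `|B̃² - B̃'²| ≤ (|B̃| + |B̃'|) |B̃ - B̃'|` bounds `‖a‖_∞`.
Both exponents are nonpositive and `exp` is `1`-Lipschitz on `(-∞, 0]`, so integrating the
bound on `G` over `[t, s] ⊆ [t, T]` gives the factor `(T - t)²`.
-/

open Set

/-- The supremum norm of `f` on the interval `[0, T]`. -/
noncomputable def supNorm (T : ℝ) (f : ℝ → ℝ) : ℝ :=
  sSup ((fun t => |f t|) '' Icc 0 T)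

open Real intervalIntegral MeasureTheory

lemma ContinuousOn.exists_continuous_eqOn_Icc {α β : Type*} [LinearOrder α]
    [TopologicalSpace α] [OrderTopology α] [TopologicalSpace β] {f : α → β} {a b : α}
    (hab : a ≤ b) (hf : ContinuousOn f (Icc a b)) :
    ∃ g : α → β, Continuous g ∧ EqOn g f (Icc a b) :=
  ⟨IccExtend hab ((Icc a b).domRestrict f),
    (continuousOn_iff_continuous_domRestrict.mp hf).Icc_extend',
    fun _ hx => IccExtend_of_mem hab _ hx⟩

lemma abs_le_supNorm {T : ℝ} {f : ℝ → ℝ} (hf : ContinuousOn f (Icc 0 T)) {x : ℝ}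
    (hx : x ∈ Icc 0 T) : |f x| ≤ supNorm T f :=
  le_csSup (isCompact_Icc.image_of_continuousOn hf.abs).bddAbove ⟨x, hx, rfl⟩

lemma abs_sq_sub_sq_le (x y : ℝ) : |x ^ 2 - y ^ 2| ≤ (|x| + |y|) * |x - y| := by
  rw [sq_sub_sq, abs_mul]
  gcongr
  exact abs_add_le x y

lemma abs_sq_sub_sq_le_supNorm {T : ℝ} {f g : ℝ → ℝ} (hf : ContinuousOn f (Icc 0 T))
    (hg : ContinuousOn g (Icc 0 T)) {x : ℝ} (hx : x ∈ Icc 0 T) :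
    |f x ^ 2 - g x ^ 2| ≤ (supNorm T f + supNorm T g) * supNorm T (fun u => f u - g u) :=
  (abs_sq_sub_sq_le _ _).trans <| mul_le_mul
    (add_le_add (abs_le_supNorm hf hx) (abs_le_supNorm hg hx))
    (abs_le_supNorm (f := fun u => f u - g u) (hf.sub hg) hx) (abs_nonneg _)
    (add_nonneg ((abs_nonneg _).trans (abs_le_supNorm hf hx))
      ((abs_nonneg _).trans (abs_le_supNorm hg hx)))

lemma lipschitzOnWith_exp_Iic_zero : LipschitzOnWith 1 exp (Iic 0) :=
  (convex_Iic 0).lipschitzOnWith_of_nnnorm_deriv_le (fun _ _ => differentiableAt_exp)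
    fun x hx => by
      rw [Real.deriv_exp, ← NNReal.coe_le_coe, coe_nnnorm, norm_of_nonneg (exp_pos x).le]
      simpa using hx

lemma integral_nonpos_of_nonpos_on {f : ℝ → ℝ} {a b : ℝ} (hab : a ≤ b)
    (hf : ∀ x ∈ Icc a b, f x ≤ 0) : ∫ x in a..b, f x ≤ 0 := by
  simpa using integral_nonneg hab fun x hx => neg_nonneg.2 (hf x hx)

lemma abs_exp_integral_sub_exp_integral_le {f g : ℝ → ℝ} {a b K : ℝ} (hab : a ≤ b)
    (hf : IntervalIntegrable f volume a b) (hg : IntervalIntegrable g volume a b)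
    (hf₀ : ∀ x ∈ Icc a b, f x ≤ 0) (hg₀ : ∀ x ∈ Icc a b, g x ≤ 0)
    (hK : ∀ x ∈ Icc a b, |f x - g x| ≤ K) :
    |exp (∫ x in a..b, f x) - exp (∫ x in a..b, g x)| ≤ K * (b - a) := by
  have hexp := lipschitzOnWith_exp_Iic_zero.dist_le_mul _
    (integral_nonpos_of_nonpos_on hab hf₀) _ (integral_nonpos_of_nonpos_on hab hg₀)
  have hint : ‖∫ x in a..b, (f x - g x)‖ ≤ K * |b - a| :=
    norm_integral_le_of_norm_le_const fun x hx =>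
      hK x (Ioc_subset_Icc_self (uIoc_of_le hab ▸ hx))
  rw [integral_sub hf hg, Real.norm_eq_abs, abs_of_nonneg (sub_nonneg.2 hab)] at hint
  rw [NNReal.coe_one, one_mul, Real.dist_eq, Real.dist_eq] at hexp
  exact hexp.trans hint

section LinearBackwardEquation

variable {a c G : ℝ → ℝ} {t₀ T : ℝ}

/-- Variation of constants: the hypothesis says `G' = a - c G` with `G T = 0`, and
`exp (∫_T^t c)` is an integrating factor. -/
lemma exp_integral_mul_eq_neg_integral (ha : Continuous a) (hc : Continuous c)
    (hG : Continuous G) (hGeq : ∀ t ∈ Icc t₀ T, G t = -∫ s in t..T, (a s - c s * G s))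
    {t : ℝ} (ht : t ∈ Icc t₀ T) :
    exp (∫ r in T..t, c r) * G t = -∫ s in t..T, exp (∫ r in T..s, c r) * a s := by
  set μ : ℝ → ℝ := fun x => exp (∫ r in T..x, c r)
  set W : ℝ → ℝ := fun x => ∫ s in T..x, (a s - c s * G s)
  have hWG : EqOn W G (Icc t₀ T) := fun x hx => by
    rw [hGeq x hx, integral_symm, neg_neg]
  have hμ : ∀ x, HasDerivAt μ (μ x * c x) x := fun x =>
    (hc.integral_hasStrictDerivAt T x).hasDerivAt.exp
  have hW : ∀ x, HasDerivAt W (a x - c x * G x) x := fun x =>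
    ((ha.sub (hc.mul hG)).integral_hasStrictDerivAt T x).hasDerivAt
  have hμW : ∀ x ∈ uIcc t T, HasDerivAt (fun x => μ x * W x) (μ x * a x) x := by
    intro x hx
    rw [uIcc_of_le ht.2] at hx
    refine ((hμ x).mul (hW x)).congr_deriv ?_
    rw [hWG ⟨ht.1.trans hx.1, hx.2⟩]
    ring
  have hint : IntervalIntegrable (fun x => μ x * a x) volume t T :=
    ((continuous_iff_continuousAt.2 fun x => (hμ x).continuousAt).mul ha).intervalIntegrable t T
  rw [integral_eq_sub_of_hasDerivAt hμW hint, ← hWG ht]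
  simp [μ, W]

lemma abs_le_mul_sub_of_eq_neg_integral (ha : Continuous a) (hc : Continuous c)
    (hG : Continuous G) (hc₀ : ∀ t ∈ Icc t₀ T, c t ≤ 0) {M : ℝ}
    (haM : ∀ t ∈ Icc t₀ T, |a t| ≤ M)
    (hGeq : ∀ t ∈ Icc t₀ T, G t = -∫ s in t..T, (a s - c s * G s))
    {t : ℝ} (ht : t ∈ Icc t₀ T) : |G t| ≤ M * (T - t) := by
  set μ : ℝ → ℝ := fun x => exp (∫ r in T..x, c r)
  have hμ_anti : ∀ s ∈ Icc t T, μ s ≤ μ t := fun s hs => by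
    rw [exp_le_exp, ← integral_add_adjacent_intervals (b := t) (hc.intervalIntegrable _ _)
      (hc.intervalIntegrable _ _), add_le_iff_nonpos_right]
    exact integral_nonpos_of_nonpos_on hs.1 fun r hr => hc₀ r ⟨ht.1.trans hr.1, hr.2.trans hs.2⟩
  have hbound : ‖∫ s in t..T, μ s * a s‖ ≤ μ t * M * |T - t| :=
    norm_integral_le_of_norm_le_const fun s hs => by
      rw [uIoc_of_le ht.2] at hs
      rw [norm_mul, norm_of_nonneg (exp_pos _).le]
      exact mul_le_mul (hμ_anti s (Ioc_subset_Icc_self hs)) (haM s ⟨ht.1.trans hs.1.le, hs.2⟩)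
        (norm_nonneg _) (exp_pos _).le
  rw [← norm_neg, ← exp_integral_mul_eq_neg_integral ha hc hG hGeq ht, norm_mul,
    norm_of_nonneg (exp_pos _).le, abs_of_nonneg (sub_nonneg.2 ht.2), mul_assoc] at hbound
  exact le_of_mul_le_mul_left hbound (exp_pos _)

lemma abs_le_mul_sub_of_eq_neg_integral_of_continuousOn (ha : ContinuousOn a (Icc t₀ T))
    (hc : ContinuousOn c (Icc t₀ T)) (hG : ContinuousOn G (Icc t₀ T))
    (hc₀ : ∀ t ∈ Icc t₀ T, c t ≤ 0) {M : ℝ} (haM : ∀ t ∈ Icc t₀ T, |a t| ≤ M)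
    (hGeq : ∀ t ∈ Icc t₀ T, G t = -∫ s in t..T, (a s - c s * G s))
    {t : ℝ} (ht : t ∈ Icc t₀ T) : |G t| ≤ M * (T - t) := by
  have hT : t₀ ≤ T := ht.1.trans ht.2
  obtain ⟨a', ha', haa'⟩ := ha.exists_continuous_eqOn_Icc hT
  obtain ⟨c', hc', hcc'⟩ := hc.exists_continuous_eqOn_Icc hT
  obtain ⟨G', hG', hGG'⟩ := hG.exists_continuous_eqOn_Icc hT
  rw [← hGG' ht]
  refine abs_le_mul_sub_of_eq_neg_integral ha' hc' hG' (fun s hs => hcc' hs ▸ hc₀ s hs)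
    (fun s hs => haa' hs ▸ haM s hs) (fun s hs => ?_) ht
  rw [hGG' hs, hGeq s hs]
  congr 1
  refine integral_congr fun r hr => ?_
  rw [uIcc_of_le hs.2] at hr
  have hr' : r ∈ Icc t₀ T := ⟨hs.1.trans hr.1, hr.2⟩
  simp only [haa' hr', hcc' hr', hGG' hr']

end LinearBackwardEquation

lemma riccati_sub_eq_neg_integral {k t₀ T : ℝ} {B B' F F' : ℝ → ℝ}
    (hB : ContinuousOn B (Icc t₀ T)) (hB' : ContinuousOn B' (Icc t₀ T))
    (hF : ContinuousOn F (Icc t₀ T)) (hF' : ContinuousOn F' (Icc t₀ T))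
    (hFeq : ∀ t ∈ Icc t₀ T, F t = -∫ s in t..T, (k * B s ^ 2 - F s ^ 2))
    (hF'eq : ∀ t ∈ Icc t₀ T, F' t = -∫ s in t..T, (k * B' s ^ 2 - F' s ^ 2))
    {t : ℝ} (ht : t ∈ Icc t₀ T) :
    F t - F' t = -∫ s in t..T, (k * (B s ^ 2 - B' s ^ 2) - (F s + F' s) * (F s - F' s)) := by
  have hint : ∀ {B F : ℝ → ℝ}, ContinuousOn B (Icc t₀ T) → ContinuousOn F (Icc t₀ T) →
      IntervalIntegrable (fun s => k * B s ^ 2 - F s ^ 2) volume t T := fun hB hF =>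
    (((continuousOn_const.mul (hB.pow 2)).sub (hF.pow 2)).mono
      (Icc_subset_Icc_left ht.1)).intervalIntegrable_of_Icc ht.2
  rw [hFeq t ht, hF'eq t ht, integral_congr
    (f := fun s => k * (B s ^ 2 - B' s ^ 2) - (F s + F' s) * (F s - F' s))
    (g := fun s => (k * B s ^ 2 - F s ^ 2) - (k * B' s ^ 2 - F' s ^ 2)) fun s _ => by ring,
    integral_sub (hint hB hF) (hint hB' hF')]
  ring

theorem riccati_exp_stability_general
    (γhat lam T : ℝ) (hγ : 0 < γhat) (hlam : 0 < lam)
    (Btil Btil' : ℝ → ℝ)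
    (hB : ContinuousOn Btil (Icc 0 T)) (hB' : ContinuousOn Btil' (Icc 0 T))
    (F F' : ℝ → ℝ)
    (hFcont : ContinuousOn F (Icc 0 T)) (hF'cont : ContinuousOn F' (Icc 0 T))
    (hFsol : ∀ t ∈ Icc (0:ℝ) T, F t = -∫ s in t..T, (γhat / lam * Btil s ^ 2 - F s ^ 2))
    (hF'sol : ∀ t ∈ Icc (0:ℝ) T, F' t = -∫ s in t..T, (γhat / lam * Btil' s ^ 2 - F' s ^ 2))
    (hFnonpos : ∀ t ∈ Icc (0:ℝ) T, F t ≤ 0)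
    (hF'nonpos : ∀ t ∈ Icc (0:ℝ) T, F' t ≤ 0) :
    ∀ t s : ℝ, 0 ≤ t → t ≤ s → s ≤ T →
      |Real.exp (∫ r in t..s, F r) - Real.exp (∫ r in t..s, F' r)| ≤
        γhat / lam * (supNorm T Btil + supNorm T Btil') *
          supNorm T (fun u => Btil u - Btil' u) * (T - t) ^ 2 := by
  intro t s ht hts hsT
  have hk : 0 < γhat / lam := div_pos hγ hlam
  set M := γhat / lam * (supNorm T Btil + supNorm T Btil') * supNorm T (fun u => Btil u - Btil' u)
  have haM : ∀ r ∈ Icc 0 T, |γhat / lam * (Btil r ^ 2 - Btil' r ^ 2)| ≤ M := fun r hr => by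
    rw [abs_mul, abs_of_pos hk]
    exact (mul_le_mul_of_nonneg_left (abs_sq_sub_sq_le_supNorm hB hB' hr) hk.le).trans_eq
      (mul_assoc _ _ _).symm
  have hM : 0 ≤ M := (abs_nonneg _).trans (haM t ⟨ht, hts.trans hsT⟩)
  have hdiff : ∀ r ∈ Icc 0 T, |F r - F' r| ≤ M * (T - r) := fun r hr =>
    abs_le_mul_sub_of_eq_neg_integral_of_continuousOn
      (a := fun r => γhat / lam * (Btil r ^ 2 - Btil' r ^ 2)) (c := fun r => F r + F' r)
      (G := fun r => F r - F' r) (continuousOn_const.mul ((hB.pow 2).sub (hB'.pow 2)))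
      (hFcont.add hF'cont) (hFcont.sub hF'cont)
      (fun x hx => add_nonpos (hFnonpos x hx) (hF'nonpos x hx)) haM
      (fun x hx => riccati_sub_eq_neg_integral hB hB' hFcont hF'cont hFsol hF'sol hx) hr
  have hsub : Icc t s ⊆ Icc 0 T := Icc_subset_Icc ht hsT
  calc _ ≤ M * (T - t) * (s - t) :=
        abs_exp_integral_sub_exp_integral_le hts
          ((hFcont.mono hsub).intervalIntegrable_of_Icc hts)
          ((hF'cont.mono hsub).intervalIntegrable_of_Icc hts)
          (fun r hr => hFnonpos r (hsub hr)) (fun r hr => hF'nonpos r (hsub hr))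
          fun r hr => (hdiff r (hsub hr)).trans (by gcongr; exact hr.1)
    _ ≤ M * (T - t) ^ 2 := by
        rw [sq, ← mul_assoc]
        exact mul_le_mul_of_nonneg_left (by linarith) (mul_nonneg hM (by linarith))

/-- Stability of the exponential discount factors built from the nonpositive Riccati
solutions: for `0 ≤ t ≤ s ≤ T`,
`|exp(∫ₜˢ F^{B̃}) − exp(∫ₜˢ F^{B̃′})| ≤ (γ̂/λ)(‖B̃‖_∞ + ‖B̃′‖_∞)‖B̃ − B̃′‖_∞(T − t)²`. -/
theorem riccati_exp_stability
    (γhat lam T : ℝ) (hγ : 0 < γhat) (hlam : 0 < lam) (hT : 0 < T)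
    (Btil Btil' : ℝ → ℝ)
    (hB : ContinuousOn Btil (Icc 0 T)) (hB' : ContinuousOn Btil' (Icc 0 T))
    (F F' : ℝ → ℝ)
    (hFcont : ContinuousOn F (Icc 0 T)) (hF'cont : ContinuousOn F' (Icc 0 T))
    (hFsol : ∀ t ∈ Icc (0:ℝ) T, F t = -∫ s in t..T, (γhat / lam * Btil s ^ 2 - F s ^ 2))
    (hF'sol : ∀ t ∈ Icc (0:ℝ) T, F' t = -∫ s in t..T, (γhat / lam * Btil' s ^ 2 - F' s ^ 2))
    (hFnonpos : ∀ t ∈ Icc (0:ℝ) T, F t ≤ 0)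
    (hF'nonpos : ∀ t ∈ Icc (0:ℝ) T, F' t ≤ 0) :
    ∀ t s : ℝ, 0 ≤ t → t ≤ s → s ≤ T →
      |Real.exp (∫ r in t..s, F r) - Real.exp (∫ r in t..s, F' r)| ≤
        γhat / lam * (supNorm T Btil + supNorm T Btil') *
          supNorm T (fun u => Btil u - Btil' u) * (T - t) ^ 2 :=
  riccati_exp_stability_general γhat lam T hγ hlam Btil Btil' hB hB' F F' hFcont hF'cont hFsol
    hF'sol hFnonpos hF'nonpos
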